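/- arXiv:1804.09709 — 2 statements merged into one kernel-verified Lean document; each statement's English description precedes it below -/
import Mathlib

section
/- Dimension formula for the cycle invariant: for every permutation σ of S_n, the sum of the lengths of the cycles of σ equals n − 1, i.e. Σ_{ℓ ∈ λ(σ)} ℓ = n − 1 (sum with multiplicity). Equivalently, if m_i denotes the multiplicity of the integer i in λ(σ), then Σ_i i·m_i = n − 1. -/
namespace Rauzy

/-- Darts: `Sum.inl i` is the bottom point of (0-indexed) position `i`,
`Sum.inr j` is the top point of (0-indexed) position `j`. -/
abbrev Darts (n : ℕ) := Fin n ⊕ Fin n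

/-- The chord involution of the diagram of `σ`: bottom point `i` ↔ top point `σ i`. -/
def chordInv {n : ℕ} (σ : Equiv.Perm (Fin n)) : Equiv.Perm (Darts n) :=
  (Equiv.sumCongr (σ : Fin n ≃ Fin n) (σ⁻¹ : Fin n ≃ Fin n)).trans (Equiv.sumComm _ _)

/-- Coding of the `2n` points, in clockwise order `b_1, …, b_n, t_n, …, t_1`, by `Fin (n + n)`. -/
def circCode (n : ℕ) : Darts n ≃ Fin (n + n) :=
  (Equiv.sumCongr (Equiv.refl (Fin n)) (Fin.revPerm : Equiv.Perm (Fin n))).trans finSumFinEquiv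

/-- Clockwise successor among the `2n` circle points. -/
def nextPoint (n : ℕ) : Equiv.Perm (Darts n) :=
  ((circCode n).trans (finRotate (n + n))).trans (circCode n).symm

/-- The face (boundary walk) permutation of the one-vertex ribbon graph whose chords are
the edges of `σ`; the faces of the ribbon graph are the orbits of this permutation. -/
def facePerm {n : ℕ} (σ : Equiv.Perm (Fin n)) : Equiv.Perm (Darts n) :=
  (chordInv σ).trans (nextPoint n)

/-- The step made from dart `p` traverses the circle arc whose clockwise starting point is
`chordInv σ p`; this arc is one of the `n - 1` (proper) top arcs exactly when that point is a
top point other than the leftmost one. -/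
def isTopStart {n : ℕ} (σ : Equiv.Perm (Fin n)) (p : Darts n) : Bool :=
  match chordInv σ p with
  | Sum.inl _ => false
  | Sum.inr j => decide (1 ≤ (j : ℕ))

/-- The face (orbit of the face permutation) containing the dart `p`. -/
def faceOf {n : ℕ} (σ : Equiv.Perm (Fin n)) (p : Darts n) : Finset (Darts n) :=
  Finset.univ.filter fun q => ∃ k : Fin (n + n), ((facePerm σ) ^ (k : ℕ)) p = q

/-- The length of a face: the number of top arcs on its boundary. -/
def faceLen {n : ℕ} (σ : Equiv.Perm (Fin n)) (F : Finset (Darts n)) : ℕ :=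
  (F.filter fun q => isTopStart σ q = true).card

/-- The cycle invariant `λ(σ)`: the multiset of the lengths of the cycles (faces) of `σ`. -/
def cycleInv {n : ℕ} (σ : Equiv.Perm (Fin n)) : Multiset ℕ :=
  (Finset.univ.image fun p => faceOf σ p).val.map (faceLen σ)

/-- `χ(S)`: the number of pairs `i < j` in `S` with `σ i > σ j`. -/
def inversions {n : ℕ} (σ : Equiv.Perm (Fin n)) (S : Finset (Fin n)) : ℕ :=
  ((S ×ˢ S).filter fun p => p.1 < p.2 ∧ σ p.2 < σ p.1).card

/-- `A(σ) = Σ_{S ⊆ {1,…,n}} (-1)^{|S| + χ(S)}`. -/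
def signSum {n : ℕ} (σ : Equiv.Perm (Fin n)) : ℤ :=
  ∑ S : Finset (Fin n), (-1 : ℤ) ^ (S.card + inversions σ S)

/-- The sign invariant `s(σ) ∈ {-1, 0, 1}`. -/
def signInv {n : ℕ} (σ : Equiv.Perm (Fin n)) : ℤ := (signSum σ).sign

/-- The permutation of the values which fixes `v ≤ a`, sends `v ↦ v + 1` for
`a < v < n` and the largest value to `a + 1` (the identity if `a` is the largest value). -/
def topCycle {n : ℕ} (a : Fin (n + 1)) : Equiv.Perm (Fin (n + 1)) :=
  if a = Fin.last n then 1
  else (Equiv.addLeft (a + 1)).permCongr (Fin.cycleRange (Fin.last n - (a + 1)))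

/-- The Rauzy move `L`. -/
def moveL : {n : ℕ} → Equiv.Perm (Fin n) → Equiv.Perm (Fin n)
  | 0, σ => σ
  | (k + 1), σ => topCycle (σ (Fin.last k)) * σ

/-- The Rauzy move `L'`. -/
def moveL' : {n : ℕ} → Equiv.Perm (Fin n) → Equiv.Perm (Fin n)
  | 0, σ => σ
  | (k + 1), σ => σ * (topCycle (σ⁻¹ (Fin.last k)))⁻¹

/-- Rotation of the diagram by 180 degrees: `rot(σ)(i) = n + 1 - σ⁻¹(n + 1 - i)`. -/
def rotD {n : ℕ} (σ : Equiv.Perm (Fin n)) : Equiv.Perm (Fin n) :=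
  (Fin.revPerm : Equiv.Perm (Fin n)) * σ⁻¹ * (Fin.revPerm : Equiv.Perm (Fin n))

/-- The Rauzy move `R = rot ∘ L ∘ rot`. -/
def moveR {n : ℕ} (σ : Equiv.Perm (Fin n)) : Equiv.Perm (Fin n) := rotD (moveL (rotD σ))

/-- The Rauzy move `R' = rot ∘ L' ∘ rot`. -/
def moveR' {n : ℕ} (σ : Equiv.Perm (Fin n)) : Equiv.Perm (Fin n) := rotD (moveL' (rotD σ))

/-- One step of the extended Rauzy dynamics. -/
def RauzyStep {n : ℕ} (σ τ : Equiv.Perm (Fin n)) : Prop :=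
  τ = moveL σ ∨ τ = moveL' σ ∨ τ = moveR σ ∨ τ = moveR' σ

/-- Two permutations are connected (are in the same class) under the extended Rauzy dynamics. -/
def RauzyConnected {n : ℕ} (σ τ : Equiv.Perm (Fin n)) : Prop :=
  Relation.EqvGen RauzyStep σ τ

/-- The exceptional class is the class of the identity permutation. -/
def Exceptional {n : ℕ} (σ : Equiv.Perm (Fin n)) : Prop := RauzyConnected σ 1

/-- Reduction of `σ` by the edge `(i, σ i)`: delete bottom point `i` and top point `σ i`
and renumber the remaining points in order. -/
def reduceAt {n : ℕ} (σ : Equiv.Perm (Fin (n + 1))) (i : Fin (n + 1)) : Equiv.Perm (Fin n) :=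
  Equiv.removeNone
    (((finSuccEquiv' i).symm.trans (σ : Fin (n + 1) ≃ Fin (n + 1))).trans (finSuccEquiv' (σ i)))

/-- Insertion of one new edge in `σ`, with bottom endpoint at (new) position `b` and top
endpoint at (new) position `t`. -/
def insertAt {n : ℕ} (σ : Equiv.Perm (Fin (n + 1))) (b t : Fin (n + 2)) :
    Equiv.Perm (Fin (n + 2)) :=
  ((finSuccEquiv' b).trans (Equiv.optionCongr σ)).trans (finSuccEquiv' t).symm

/-- The face containing the top arc whose clockwise starting point is the top point `j`
(for `1 ≤ j` this is the top arc lying immediately to the left of top point `j`). -/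
def faceOfTopPoint {n : ℕ} (σ : Equiv.Perm (Fin n)) (j : Fin n) : Finset (Darts n) :=
  faceOf σ (chordInv σ (Sum.inr j))

/-- The face containing the bottom arc between bottom points `i` and `i + 1`. -/
def faceOfBotPoint {n : ℕ} (σ : Equiv.Perm (Fin n)) (i : Fin n) : Finset (Darts n) :=
  faceOf σ (chordInv σ (Sum.inl i))

/-- The top principal cycle: the face containing the top arc between top points 1 and 2. -/
def topPrincipalFace {n : ℕ} (σ : Equiv.Perm (Fin (n + 1))) : Finset (Darts (n + 1)) :=
  faceOfTopPoint σ 1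

/-- The bottom principal cycle: the face containing the bottom arc between bottom points
1 and 2. -/
def botPrincipalFace {n : ℕ} (σ : Equiv.Perm (Fin (n + 1))) : Finset (Darts (n + 1)) :=
  faceOfBotPoint σ 0

def topPrincipalLen {n : ℕ} (σ : Equiv.Perm (Fin (n + 1))) : ℕ :=
  faceLen σ (topPrincipalFace σ)

def botPrincipalLen {n : ℕ} (σ : Equiv.Perm (Fin (n + 1))) : ℕ :=
  faceLen σ (botPrincipalFace σ)

/-- The dart whose step traverses the top principal arc. -/
def topPrincipalDart {n : ℕ} (σ : Equiv.Perm (Fin (n + 1))) : Darts (n + 1) :=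
  chordInv σ (Sum.inr 1)

/-- The dart whose step traverses the bottom principal arc. -/
def botPrincipalDart {n : ℕ} (σ : Equiv.Perm (Fin (n + 1))) : Darts (n + 1) :=
  chordInv σ (Sum.inl 0)

open scoped Classical in
/-- When the top and bottom principal arcs lie on a common cycle, the number of top arcs on
the portion of that cycle going from the bottom principal arc to the top principal arc
(inclusive of the latter). -/
noncomputable def portionA {n : ℕ} (σ : Equiv.Perm (Fin (n + 1))) : ℕ :=
  if h : ∃ k, 0 < k ∧ ((facePerm σ) ^ k) (botPrincipalDart σ) = topPrincipalDart σ then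
    ((Finset.Icc 1 (Nat.find h)).filter fun e =>
      isTopStart σ (((facePerm σ) ^ e) (botPrincipalDart σ)) = true).card
  else 0

open scoped Classical in
/-- The number of top arcs on the other portion, from the top principal arc (inclusive)
to the bottom principal arc. -/
noncomputable def portionB {n : ℕ} (σ : Equiv.Perm (Fin (n + 1))) : ℕ :=
  if h : ∃ k, 0 < k ∧ ((facePerm σ) ^ k) (topPrincipalDart σ) = botPrincipalDart σ then
    ((Finset.range (Nat.find h)).filter fun e =>
      isTopStart σ (((facePerm σ) ^ e) (topPrincipalDart σ)) = true).card
  else 0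

/-- A standard permutation has type `X(r, i)` if its top and bottom principal cycles are
distinct, of lengths `r` and `i` respectively. -/
def TypeX {n : ℕ} (σ : Equiv.Perm (Fin (n + 1))) (r i : ℕ) : Prop :=
  topPrincipalFace σ ≠ botPrincipalFace σ ∧ topPrincipalLen σ = r ∧ botPrincipalLen σ = i

/-- A standard permutation has type `H(a, b)` if its top and bottom principal cycles
coincide, and the two portions into which the two principal arcs divide this common cycle
carry `a` resp. `b` top arcs. -/
def TypeH {n : ℕ} (σ : Equiv.Perm (Fin (n + 1))) (a b : ℕ) : Prop :=
  topPrincipalFace σ = botPrincipalFace σ ∧ portionA σ = a ∧ portionB σ = b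

instance {n : ℕ} (σ : Equiv.Perm (Fin (n + 1))) (r i : ℕ) : Decidable (TypeX σ r i) :=
  inferInstanceAs (Decidable
    (topPrincipalFace σ ≠ botPrincipalFace σ ∧ topPrincipalLen σ = r ∧ botPrincipalLen σ = i))

noncomputable instance {n : ℕ} (σ : Equiv.Perm (Fin (n + 1))) (a b : ℕ) : Decidable (TypeH σ a b) :=
  inferInstanceAs (Decidable
    (topPrincipalFace σ = botPrincipalFace σ ∧ portionA σ = a ∧ portionB σ = b))

/-- The step made from dart `p` traverses one of the two side arcs (the arc from `t_1` to
`b_1`, or the arc from `b_n` to `t_n`). -/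
def isSideStart {n : ℕ} (σ : Equiv.Perm (Fin (n + 1))) (p : Darts (n + 1)) : Prop :=
  chordInv σ p = Sum.inr 0 ∨ chordInv σ p = Sum.inl (Fin.last n)

/-- Given labelling data `f`, the dart of the arc carrying label `(m, k, j)`: for odd `j` the
top arc `t_{j,m,k}` whose clockwise starting top point is `f m k j`, for even `j` the bottom
arc `b_{j,m,k}` starting at bottom point `f m k j`. -/
def labDart {n : ℕ} (σ : Equiv.Perm (Fin (n + 1))) (f : ℕ → ℕ → ℕ → Fin (n + 1))
    (m k j : ℕ) : Darts (n + 1) :=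
  if j % 2 = 1 then chordInv σ (Sum.inr (f m k j)) else chordInv σ (Sum.inl (f m k j))

/-- `(m, k, j)` is a valid arc label: `m` occurs in `λ(σ)` with multiplicity at least `k ≥ 1`,
and `j < 2m`. -/
def ValidLabel {n : ℕ} (σ : Equiv.Perm (Fin (n + 1))) (m k j : ℕ) : Prop :=
  1 ≤ k ∧ k ≤ (cycleInv σ).count m ∧ j < 2 * m

/-- `f` is a consistent labelling of the arcs of `σ`: for each cycle of length `m`
(the `k`-th among those), its top arcs are labelled `t_{1,m,k}, t_{3,m,k}, …` and its bottom
arcs `b_{0,m,k}, b_{2,m,k}, …`, interleaved, following the cyclic order of the cycle. -/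
def IsConsistentLabelling {n : ℕ} (σ : Equiv.Perm (Fin (n + 1)))
    (f : ℕ → ℕ → ℕ → Fin (n + 1)) : Prop :=
  (∀ m k j, ValidLabel σ m k j → j % 2 = 1 → 1 ≤ (f m k j : ℕ)) ∧
  (∀ m k j, ValidLabel σ m k j → j % 2 = 0 → (f m k j : ℕ) < n) ∧
  (∀ m k j, ValidLabel σ m k j →
    faceOf σ (labDart σ f m k j) = faceOf σ (labDart σ f m k 0)) ∧
  (∀ m k j, ValidLabel σ m k j → faceLen σ (faceOf σ (labDart σ f m k j)) = m) ∧
  (∀ m k j m' k' j', ValidLabel σ m k j → ValidLabel σ m' k' j' →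
    labDart σ f m k j = labDart σ f m' k' j' → m = m' ∧ k = k' ∧ j = j') ∧
  (∀ m k m' k', ValidLabel σ m k 0 → ValidLabel σ m' k' 0 →
    faceOf σ (labDart σ f m k 0) = faceOf σ (labDart σ f m' k' 0) → m = m' ∧ k = k') ∧
  (∀ p : Darts (n + 1), ¬ isSideStart σ p → ∃ m k j, ValidLabel σ m k j ∧ labDart σ f m k j = p) ∧
  (∀ m k j, ValidLabel σ m k j → ∃ d, 0 < d ∧
    ((facePerm σ) ^ d) (labDart σ f m k j) = labDart σ f m k ((j + 1) % (2 * m)) ∧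
    ∀ e, 0 < e → e < d → isSideStart σ (((facePerm σ) ^ e) (labDart σ f m k j)))

/-! The faces of the ribbon graph partition the darts, and a dart starts a top arc exactly when
its chord partner is one of the top points `t_2, …, t_n`. Summing the face lengths therefore
counts each of the `n - 1` top arcs exactly once. -/

open Equiv Equiv.Perm Finset Function

lemma card_filter_one_le_val (n : ℕ) : #{i : Fin n | 1 ≤ (i : ℕ)} = n - 1 := by
  have h := card_filter_add_card_filter_not (s := univ) fun i : Fin n => (i : ℕ) < 1
  simp only [Fin.card_filter_val_lt, not_lt, card_univ, Fintype.card_fin] at h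
  omega

section Faces

variable {n : ℕ} (σ : Perm (Fin n))

lemma mem_faceOf_iff (p q : Darts n) : q ∈ faceOf σ p ↔ (facePerm σ).SameCycle p q := by
  simp only [faceOf, mem_filter, mem_univ, true_and]
  refine ⟨fun ⟨k, hk⟩ => ⟨k, by simpa [zpow_natCast] using hk⟩, fun h => ?_⟩
  obtain ⟨k, rfl⟩ := h.exists_nat_pow_eq
  have hpos : 0 < minimalPeriod (facePerm σ) p :=
    minimalPeriod_pos_of_mem_periodicPts ((facePerm σ).injective.mem_periodicPts p)
  have hle : minimalPeriod (facePerm σ) p ≤ n + n := by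
    simpa using minimalPeriod_le_card (f := facePerm σ) (x := p)
  refine ⟨⟨k % minimalPeriod (facePerm σ) p, (Nat.mod_lt k hpos).trans_le hle⟩, ?_⟩
  simp only [coe_pow, iterate_mod_minimalPeriod_eq]

lemma faceOf_eq_faceOf_iff (p q : Darts n) :
    faceOf σ p = faceOf σ q ↔ (facePerm σ).SameCycle p q := by
  refine ⟨fun h => ?_, fun h => ?_⟩
  · rw [← mem_faceOf_iff, h, mem_faceOf_iff]
  · ext r
    simp only [mem_faceOf_iff]
    exact ⟨h.symm.trans, h.trans⟩

lemma sum_faceLen_eq_card_isTopStart :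
    ∑ F ∈ univ.image (faceOf σ), faceLen σ F = #{q | isTopStart σ q} := by
  rw [card_eq_sum_card_fiberwise (f := faceOf σ) fun q _ => mem_image_of_mem _ (mem_univ q)]
  refine sum_congr rfl fun F hF => ?_
  obtain ⟨p, -, rfl⟩ := mem_image.mp hF
  refine congrArg card (Finset.ext fun q => ?_)
  simp only [mem_filter, mem_univ, true_and, faceOf_eq_faceOf_iff, mem_faceOf_iff]
  exact ⟨fun ⟨h, hq⟩ => ⟨hq, h.symm⟩, fun ⟨hq, h⟩ => ⟨h.symm, hq⟩⟩

lemma card_isTopStart : #{q | isTopStart σ q} = n - 1 := by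
  rw [card_filter, ← (chordInv σ).symm.sum_comp]
  simp only [isTopStart, apply_symm_apply, Fintype.sum_sum_type]
  simpa using card_filter_one_le_val n

lemma sum_cycleInv : (cycleInv σ).sum = n - 1 :=
  (sum_faceLen_eq_card_isTopStart σ).trans (card_isTopStart σ)

end Faces

/-- **Dimension formula.** The lengths of the cycles of a permutation of size `n + 1` add up to
`(n + 1) - 1 = n`; equivalently `Σ_i i · m_i = n` where `m_i` is the multiplicity of `i` in
`λ(σ)`. -/
theorem dimension_formula (n : ℕ) (σ : Equiv.Perm (Fin (n + 1))) :
    (cycleInv σ).sum = n ∧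
    ∑ i ∈ (cycleInv σ).toFinset, i * (cycleInv σ).count i = n := by
  have hsum : (cycleInv σ).sum = n := sum_cycleInv σ
  refine ⟨hsum, ?_⟩
  simpa only [sum_multiset_count, smul_eq_mul, mul_comm] using hsum

end Rauzy
end

section
/- Rotation invariance of the invariants: for every permutation σ of S_n, the permutation rot(σ) defined by rot(σ)(i) = n+1−σ⁻¹(n+1−i) (the diagram of σ rotated by 180 degrees) satisfies λ(rot(σ)) = λ(σ) and s(rot(σ)) = s(σ). -/
namespace Rauzy

/-!
The half-turn `b_i ↔ t_{n+1-i}` of the circle of points conjugates the face permutation of `σ`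
into that of `rot σ`, so it maps the cycles of `σ` onto those of `rot σ`, exchanging top and
bottom arcs. A cycle carries as many bottom arcs as top arcs: a step of the boundary walk crosses
a chord, which switches rows, and then an arc, so it moves from the bottom to the top row exactly
when that arc is a top arc, from top to bottom exactly when it is a bottom arc, and stays in its
row on the two side arcs; over one turn of the cycle these moves balance.

For the sign, `S ↦ σ⁻¹ (rev S)` is a size-preserving bijection of the subsets of positions with
`χ_{rot σ}(S) = χ_σ(σ⁻¹ (rev S))`, so the sums `A(rot σ)` and `A(σ)` agree term by term.
-/

open Equiv Finset

section Circle

variable {n : ℕ}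

lemma val_finRotate_pow (m k : ℕ) (x : Fin m) : (((finRotate m) ^ k) x : ℕ) = (x + k) % m := by
  induction k with
  | zero => simp [Nat.mod_eq_of_lt x.isLt]
  | succ k ih =>
    obtain _ | m := m
    · exact x.elim0
    rw [pow_succ', Perm.mul_apply, finRotate_apply, Fin.val_add, ih, Fin.val_one', Nat.add_mod_mod,
      Nat.mod_add_mod, add_assoc]

@[simp] lemma val_circCode_inl (i : Fin n) : (circCode n (Sum.inl i) : ℕ) = i := by
  simp [circCode]

@[simp] lemma val_circCode_inr (j : Fin n) : (circCode n (Sum.inr j) : ℕ) = n + (n - 1 - j) := by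
  simp [circCode, Fin.val_rev]
  omega

lemma val_circCode_nextPoint (d : Darts n) :
    (circCode n (nextPoint n d) : ℕ) = (circCode n d + 1) % (n + n) := by
  simpa [nextPoint] using val_finRotate_pow (n + n) 1 (circCode n d)

def halfTurn (n : ℕ) : Perm (Darts n) :=
  (sumCongr (Fin.revPerm : Perm (Fin n)) Fin.revPerm).trans (sumComm _ _)

@[simp] lemma halfTurn_inl (i : Fin n) : halfTurn n (Sum.inl i) = Sum.inr i.rev := rfl

@[simp] lemma halfTurn_inr (j : Fin n) : halfTurn n (Sum.inr j) = Sum.inl j.rev := rfl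

@[simp] lemma halfTurn_halfTurn (d : Darts n) : halfTurn n (halfTurn n d) = d := by
  cases d <;> simp

lemma halfTurn_inv : (halfTurn n)⁻¹ = halfTurn n :=
  inv_eq_of_mul_eq_one_left (Perm.ext halfTurn_halfTurn)

lemma val_circCode_halfTurn (d : Darts n) :
    (circCode n (halfTurn n d) : ℕ) = (circCode n d + n) % (n + n) := by
  cases d with
  | inl i =>
    rw [halfTurn_inl, val_circCode_inr, val_circCode_inl, Fin.val_rev, Nat.mod_eq_of_lt (by omega)]
    omega
  | inr j =>
    rw [halfTurn_inr, val_circCode_inr, val_circCode_inl, Fin.val_rev,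
      show n + (n - 1 - j) + n = n - 1 - j + (n + n) by omega, Nat.add_mod_right,
      Nat.mod_eq_of_lt (by omega)]
    omega

lemma nextPoint_halfTurn (d : Darts n) :
    nextPoint n (halfTurn n d) = halfTurn n (nextPoint n d) := by
  apply (circCode n).injective
  ext
  simp only [val_circCode_nextPoint, val_circCode_halfTurn, Nat.mod_add_mod]
  ring_nf

end Circle

section Faces

variable {n : ℕ}

@[simp] lemma chordInv_inl (σ : Perm (Fin n)) (i : Fin n) :
    chordInv σ (Sum.inl i) = Sum.inr (σ i) := rfl

@[simp] lemma chordInv_inr (σ : Perm (Fin n)) (j : Fin n) :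
    chordInv σ (Sum.inr j) = Sum.inl (σ⁻¹ j) := rfl

lemma rotD_apply (σ : Perm (Fin n)) (i : Fin n) : rotD σ i = (σ⁻¹ i.rev).rev := rfl

lemma rotD_inv_apply (σ : Perm (Fin n)) (i : Fin n) : (rotD σ)⁻¹ i = (σ i.rev).rev := by
  rw [Perm.inv_eq_iff_eq, rotD_apply]
  simp

lemma chordInv_rotD (σ : Perm (Fin n)) (d : Darts n) :
    chordInv (rotD σ) (halfTurn n d) = halfTurn n (chordInv σ d) := by
  cases d <;> simp [rotD_apply, rotD_inv_apply]

lemma facePerm_rotD (σ : Perm (Fin n)) :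
    facePerm (rotD σ) = halfTurn n * facePerm σ * (halfTurn n)⁻¹ := by
  ext d : 1
  obtain ⟨d, rfl⟩ := (halfTurn n).surjective d
  simp [facePerm, chordInv_rotD, nextPoint_halfTurn, halfTurn_inv]

lemma mem_faceOf {σ : Perm (Fin n)} {p q : Darts n} :
    q ∈ faceOf σ p ↔ (facePerm σ).SameCycle p q := by
  simp only [faceOf, mem_filter, mem_univ, true_and]
  refine ⟨fun ⟨k, hk⟩ => ⟨k, by simpa using hk⟩, fun h => ?_⟩
  have hcard : 0 < n + n := by simpa using Fintype.card_pos_iff.2 ⟨p⟩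
  by_cases hp : p ∈ (facePerm σ).support
  · obtain ⟨k, hk, rfl⟩ := h.exists_pow_eq_of_mem_support hp
    refine ⟨⟨k, hk.trans_le ((card_le_univ _).trans_eq ?_)⟩, rfl⟩
    simp
  · exact ⟨⟨0, hcard⟩, h.eq_of_left (Perm.notMem_support.1 hp)⟩

lemma faceOf_rotD (σ : Perm (Fin n)) (p : Darts n) :
    faceOf (rotD σ) (halfTurn n p) = (faceOf σ p).map (halfTurn n).toEmbedding := by
  ext q
  obtain ⟨q, rfl⟩ := (halfTurn n).surjective q
  rw [mem_faceOf, facePerm_rotD, Perm.sameCycle_conj, mem_map_equiv, mem_faceOf, halfTurn_inv]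
  simp

lemma sum_faceOf_facePerm {M : Type*} [AddCommMonoid M] (σ : Perm (Fin n)) (p : Darts n)
    (g : Darts n → M) : ∑ q ∈ faceOf σ p, g (facePerm σ q) = ∑ q ∈ faceOf σ p, g q :=
  sum_equiv (facePerm σ) (fun q => by simp [mem_faceOf]) (fun _ _ => rfl)

def side : Darts n → ℕ := Sum.elim (fun _ => 0) (fun _ => 1)

/-- The bottom analogue of `isTopStart`: the arc from bottom point `i` to `i + 1` is one of the
`n - 1` bottom arcs unless `i` is the rightmost bottom point. -/
def isBotStart (σ : Perm (Fin n)) (p : Darts n) : Bool :=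
  match chordInv σ p with
  | Sum.inl i => decide ((i : ℕ) + 1 < n)
  | Sum.inr _ => false

lemma side_eq_ite (d : Darts n) : side d = if (circCode n d : ℕ) < n then 0 else 1 := by
  cases d with
  | inl i => simp [side]
  | inr j => simp [side]

lemma side_nextPoint_inl (i : Fin n) :
    side (nextPoint n (Sum.inl i)) = if (i : ℕ) + 1 < n then 0 else 1 := by
  rw [side_eq_ite, val_circCode_nextPoint, val_circCode_inl, Nat.mod_eq_of_lt (by omega)]

lemma side_nextPoint_inr (j : Fin n) :
    side (nextPoint n (Sum.inr j)) = if 1 ≤ (j : ℕ) then 1 else 0 := by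
  rw [side_eq_ite, val_circCode_nextPoint, val_circCode_inr]
  rcases Nat.eq_zero_or_pos (j : ℕ) with hj | hj
  · rw [show n + (n - 1 - j) + 1 = n + n by omega, Nat.mod_self]
    simp [hj, j.pos]
  · rw [Nat.mod_eq_of_lt (by omega), if_neg (by omega), if_pos (show 1 ≤ (j : ℕ) from hj)]

lemma side_facePerm_add (σ : Perm (Fin n)) (q : Darts n) :
    side (facePerm σ q) + (if isBotStart σ q then 1 else 0)
      = (if isTopStart σ q then 1 else 0) + side q := by
  cases q with
  | inl i =>
    change side (nextPoint n (Sum.inr (σ i))) + (if false then 1 else 0)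
      = (if decide (1 ≤ (σ i : ℕ)) then 1 else 0) + 0
    simp [side_nextPoint_inr]
  | inr j =>
    change side (nextPoint n (Sum.inl (σ.symm j)))
      + (if decide ((σ.symm j : ℕ) + 1 < n) then 1 else 0) = (if false then 1 else 0) + 1
    by_cases h : (σ.symm j : ℕ) + 1 < n <;> simp [side_nextPoint_inl, h]

lemma card_filter_isBotStart_faceOf (σ : Perm (Fin n)) (p : Darts n) :
    #((faceOf σ p).filter fun q => isBotStart σ q) = faceLen σ (faceOf σ p) := by
  have key := sum_congr rfl fun q (_ : q ∈ faceOf σ p) => side_facePerm_add σ q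
  rw [sum_add_distrib, sum_add_distrib, sum_faceOf_facePerm] at key
  rw [faceLen, card_filter, card_filter]
  omega

lemma isTopStart_rotD (σ : Perm (Fin n)) (q : Darts n) :
    isTopStart (rotD σ) (halfTurn n q) = isBotStart σ q := by
  unfold isTopStart isBotStart
  rw [chordInv_rotD]
  rcases chordInv σ q with i | j
  · simp only [halfTurn_inl, Fin.val_rev, decide_eq_decide]
    omega
  · rfl

lemma faceLen_faceOf_rotD (σ : Perm (Fin n)) (p : Darts n) :
    faceLen (rotD σ) (faceOf (rotD σ) (halfTurn n p)) = faceLen σ (faceOf σ p) := by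
  rw [faceOf_rotD, faceLen, filter_map, card_map, ← card_filter_isBotStart_faceOf]
  simp only [Function.comp_def, coe_toEmbedding, isTopStart_rotD]

end Faces

lemma cycleInv_rotD {n : ℕ} (σ : Perm (Fin n)) : cycleInv (rotD σ) = cycleInv σ := by
  have faces : univ.image (faceOf (rotD σ))
      = (univ.image (faceOf σ)).map (mapEmbedding (halfTurn n).toEmbedding).toEmbedding := by
    rw [map_eq_image, image_image]
    conv_lhs => rw [← image_univ_equiv (halfTurn n), image_image]
    exact image_congr fun p _ => faceOf_rotD σ p
  rw [cycleInv, cycleInv, faces, map_val, Multiset.map_map]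
  refine Multiset.map_congr rfl fun F hF => ?_
  obtain ⟨p, -, rfl⟩ := mem_image.1 (mem_def.2 hF)
  simp [← faceOf_rotD, faceLen_faceOf_rotD]

section Sign

variable {n : ℕ}

def rotLabel (σ : Perm (Fin n)) : Perm (Fin n) := Fin.revPerm.trans σ⁻¹

lemma inversions_rotD (σ : Perm (Fin n)) (S : Finset (Fin n)) :
    inversions (rotD σ) S = inversions σ (S.map (rotLabel σ).toEmbedding) := by
  rw [inversions, inversions, ← prodMap_map_product, filter_map, card_map]
  congr 1
  refine filter_congr fun x _ => ?_
  simp [rotLabel, rotD_apply, and_comm]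

lemma signSum_rotD (σ : Perm (Fin n)) : signSum (rotD σ) = signSum σ :=
  Fintype.sum_equiv (Equiv.finsetCongr (rotLabel σ)) _ _ fun S => by
    simp [inversions_rotD]

end Sign

/-- **Rotation invariance.** The 180 degree rotation of the diagram preserves both the cycle
invariant and the sign invariant. -/
theorem rot_invariance (n : ℕ) (σ : Equiv.Perm (Fin (n + 1))) :
    cycleInv (rotD σ) = cycleInv σ ∧ signInv (rotD σ) = signInv σ :=
  ⟨cycleInv_rotD σ, congrArg Int.sign (signSum_rotD σ)⟩

end Rauzy
end
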